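/- arXiv:1407.3550 — 6 statements merged into one kernel-verified Lean document; each statement's English description precedes it below -/
import Mathlib

section
/- The ratio (sin(2π/13)·sin(5π/13)·sin(6π/13)) / (sin(π/13)·sin(3π/13)·sin(4π/13)) equals (3 + √13)/2. -/
set_option maxHeartbeats 1000000

theorem sine_ratio_fundamental_unit :
    (Real.sin (2*Real.pi/13) * Real.sin (5*Real.pi/13) * Real.sin (6*Real.pi/13)) /
    (Real.sin (Real.pi/13) * Real.sin (3*Real.pi/13) * Real.sin (4*Real.pi/13))
      = (3 + Real.sqrt 13)/2 := by
  have hpi := Real.pi_pos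
  set ζ : ℂ := Complex.exp (Real.pi * Complex.I / 13) with hζdef
  have h13 : ζ ^ 13 = -1 := by
    rw [hζdef, ← Complex.exp_nat_mul, show ((13:ℕ):ℂ) * (Real.pi * Complex.I / 13)
      = Real.pi * Complex.I by push_cast; ring, Complex.exp_pi_mul_I]
  have hI6 : Complex.I ^ 6 = -1 := by
    norm_num [pow_succ, Complex.I_mul_I]
  have hs : ∀ k : ℕ, k ≤ 13 →
      ((Real.sin (k * Real.pi / 13) : ℝ) : ℂ) = (-ζ ^ (13 - k) - ζ ^ k) * Complex.I / 2 := by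
    intro k hk
    have e1 : Complex.exp (((k * Real.pi / 13 : ℝ) : ℂ) * Complex.I) = ζ ^ k := by
      rw [hζdef, ← Complex.exp_nat_mul]
      congr 1
      push_cast
      ring
    have hmul : ζ ^ (13 - k) * ζ ^ k = -1 := by
      rw [← pow_add, Nat.sub_add_cancel hk, h13]
    have e2 : Complex.exp (-(((k * Real.pi / 13 : ℝ) : ℂ) * Complex.I)) = -ζ ^ (13 - k) := by
      rw [Complex.exp_neg, e1]
      exact inv_eq_of_mul_eq_one_left (by linear_combination -hmul)
    rw [Complex.ofReal_sin, Complex.sin, neg_mul, e1, e2]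
  have hs1 := hs 1 (by norm_num)
  have hs2 := hs 2 (by norm_num)
  have hs3 := hs 3 (by norm_num)
  have hs4 := hs 4 (by norm_num)
  have hs5 := hs 5 (by norm_num)
  have hs6 := hs 6 (by norm_num)
  norm_num at hs1 hs2 hs3 hs4 hs5 hs6
  have key : (Real.sin (2*Real.pi/13) * Real.sin (5*Real.pi/13) * Real.sin (6*Real.pi/13))^2
      = 3 * ((Real.sin (2*Real.pi/13) * Real.sin (5*Real.pi/13) * Real.sin (6*Real.pi/13)) *
             (Real.sin (Real.pi/13) * Real.sin (3*Real.pi/13) * Real.sin (4*Real.pi/13)))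
        + (Real.sin (Real.pi/13) * Real.sin (3*Real.pi/13) * Real.sin (4*Real.pi/13))^2 := by
    have hc : (((Real.sin (2*Real.pi/13) * Real.sin (5*Real.pi/13) * Real.sin (6*Real.pi/13))^2 : ℝ) : ℂ)
      = ((3 * ((Real.sin (2*Real.pi/13) * Real.sin (5*Real.pi/13) * Real.sin (6*Real.pi/13)) *
             (Real.sin (Real.pi/13) * Real.sin (3*Real.pi/13) * Real.sin (4*Real.pi/13)))
        + (Real.sin (Real.pi/13) * Real.sin (3*Real.pi/13) * Real.sin (4*Real.pi/13))^2 : ℝ) : ℂ) := by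
      push_cast
      rw [hs1, hs2, hs3, hs4, hs5, hs6]
      linear_combination ((-1/64 : ℂ) * ζ ^ 16 + (-5/64 : ℂ) * ζ ^ 21 + (-3/64 : ℂ) * ζ ^ 22 + (-1/32 : ℂ) * ζ ^ 23 + (-3/64 : ℂ) * ζ ^ 24 + (-3/64 : ℂ) * ζ ^ 25 + (-3/64 : ℂ) * ζ ^ 26 + (-3/64 : ℂ) * ζ ^ 27 + (-3/32 : ℂ) * ζ ^ 28 + (-1/16 : ℂ) * ζ ^ 29 + (-3/64 : ℂ) * ζ ^ 30 + (-1/16 : ℂ) * ζ ^ 31 + (-9/64 : ℂ) * ζ ^ 32 + (-9/64 : ℂ) * ζ ^ 33 + (-9/64 : ℂ) * ζ ^ 34 + (-3/32 : ℂ) * ζ ^ 35 + (-5/64 : ℂ) * ζ ^ 36 + (-9/64 : ℂ) * ζ ^ 37 + (-3/32 : ℂ) * ζ ^ 38 + (-3/32 : ℂ) * ζ ^ 39 + (-3/32 : ℂ) * ζ ^ 40 + (-9/64 : ℂ) * ζ ^ 41 + (-5/64 : ℂ) * ζ ^ 42 + (-3/32 : ℂ) * ζ ^ 43 + (-9/64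 : ℂ) * ζ ^ 44 + (-9/64 : ℂ) * ζ ^ 45 + (-9/64 : ℂ) * ζ ^ 46 + (-1/16 : ℂ) * ζ ^ 47 + (-3/64 : ℂ) * ζ ^ 48 + (-1/16 : ℂ) * ζ ^ 49 + (-3/32 : ℂ) * ζ ^ 50 + (-3/64 : ℂ) * ζ ^ 51 + (-3/64 : ℂ) * ζ ^ 52 + (-3/64 : ℂ) * ζ ^ 53 + (-3/64 : ℂ) * ζ ^ 54 + (-1/32 : ℂ) * ζ ^ 55 + (-3/64 : ℂ) * ζ ^ 56 + (-5/64 : ℂ) * ζ ^ 57 + (-1/64 : ℂ) * ζ ^ 62) * hI6 + ((1/64 : ℂ) * ζ ^ 16 + (5/64 : ℂ) * ζ ^ 21 + (3/64 : ℂ) * ζ ^ 22 + (1/32 : ℂ) * ζ ^ 23 + (3/64 : ℂ) * ζ ^ 24 + (3/64 : ℂ) * ζ ^ 25 + (3/64 : ℂ) * ζ ^ 26 + (3/64 : ℂ) * ζ ^ 27 + (3/32 : ℂ) * ζ ^ 28 + (3/64 : ℂ) * ζ ^ 29 + (3/64 : ℂ) * ζ ^ 30 + (1/16 : ℂ) *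 ζ ^ 31 + (9/64 : ℂ) * ζ ^ 32 + (9/64 : ℂ) * ζ ^ 33 + (1/16 : ℂ) * ζ ^ 34 + (3/64 : ℂ) * ζ ^ 35 + (3/64 : ℂ) * ζ ^ 36 + (3/32 : ℂ) * ζ ^ 37 + (3/64 : ℂ) * ζ ^ 38 + (3/64 : ℂ) * ζ ^ 39 + (3/64 : ℂ) * ζ ^ 40 + (3/64 : ℂ) * ζ ^ 41 + (1/32 : ℂ) * ζ ^ 42 + (3/64 : ℂ) * ζ ^ 43 + (5/64 : ℂ) * ζ ^ 44 + (1/64 : ℂ) * ζ ^ 49) * h13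
    exact_mod_cast hc
  have p1 : 0 < Real.sin (Real.pi/13) :=
    Real.sin_pos_of_pos_of_lt_pi (by positivity) (by nlinarith)
  have p2 : 0 < Real.sin (2*Real.pi/13) :=
    Real.sin_pos_of_pos_of_lt_pi (by positivity) (by nlinarith)
  have p3 : 0 < Real.sin (3*Real.pi/13) :=
    Real.sin_pos_of_pos_of_lt_pi (by positivity) (by nlinarith)
  have p4 : 0 < Real.sin (4*Real.pi/13) :=
    Real.sin_pos_of_pos_of_lt_pi (by positivity) (by nlinarith)
  have p5 : 0 < Real.sin (5*Real.pi/13) :=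
    Real.sin_pos_of_pos_of_lt_pi (by positivity) (by nlinarith)
  have p6 : 0 < Real.sin (6*Real.pi/13) :=
    Real.sin_pos_of_pos_of_lt_pi (by positivity) (by nlinarith)
  set N := Real.sin (2*Real.pi/13) * Real.sin (5*Real.pi/13) * Real.sin (6*Real.pi/13) with hN
  set D := Real.sin (Real.pi/13) * Real.sin (3*Real.pi/13) * Real.sin (4*Real.pi/13) with hD
  have hDpos : 0 < D := by positivity
  have hNpos : 0 < N := by positivity
  set r := N / D with hr
  have hrpos : 0 < r := div_pos hNpos hDpos
  have hND : r * D = N := div_mul_cancel₀ N hDpos.ne'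
  have hr2 : r ^ 2 = 3 * r + 1 := by
    have h2 : r ^ 2 * D ^ 2 = (3 * r + 1) * D ^ 2 := by
      linear_combination key + (r * D + N - 3 * D) * hND
    exact mul_right_cancel₀ (pow_ne_zero 2 hDpos.ne') h2
  have hrge : 3 < r := by nlinarith
  have hsq : Real.sqrt 13 = 2 * r - 3 := by
    rw [show (13:ℝ) = (2*r-3)^2 by nlinarith]
    exact Real.sqrt_sq (by linarith)
  linarith
end

section
/- Let ζ = exp(2πi/13) and let M be the 3×3 circulant-type matrix with rows (ζ-ζ¹², ζ³-ζ¹⁰, ζ⁹-ζ⁴), (ζ³-ζ¹⁰, ζ⁹-ζ⁴, ζ-ζ¹²), (ζ⁹-ζ⁴, ζ-ζ¹², ζ³-ζ¹⁰), and N the analogous matrix built from (ζ⁵-ζ⁸, ζ²-ζ¹¹, ζ⁶-ζ⁷). Then MN = NM = -√13·I and M² + N² = -13·I. -/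
open Matrix

set_option maxHeartbeats 1000000 in
theorem MN_relations
    (ζ : ℂ) (hζ : ζ = Complex.exp (2 * Real.pi * Complex.I / 13))
    (M N : Matrix (Fin 3) (Fin 3) ℂ)
    (hM : M = !![ζ - ζ^12, ζ^3 - ζ^10, ζ^9 - ζ^4;
                 ζ^3 - ζ^10, ζ^9 - ζ^4, ζ - ζ^12;
                 ζ^9 - ζ^4, ζ - ζ^12, ζ^3 - ζ^10])
    (hN : N = !![ζ^5 - ζ^8, ζ^2 - ζ^11, ζ^6 - ζ^7;
                 ζ^2 - ζ^11, ζ^6 - ζ^7, ζ^5 - ζ^8;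
                 ζ^6 - ζ^7, ζ^5 - ζ^8, ζ^2 - ζ^11]) :
    M * N = (-(Real.sqrt 13 : ℂ)) • (1 : Matrix (Fin 3) (Fin 3) ℂ) ∧
    N * M = (-(Real.sqrt 13 : ℂ)) • (1 : Matrix (Fin 3) (Fin 3) ℂ) ∧
    M^2 + N^2 = (-13 : ℂ) • (1 : Matrix (Fin 3) (Fin 3) ℂ) := by
  have h13 : ζ ^ 13 = 1 := by
    rw [hζ, ← Complex.exp_nat_mul]
    rw [show ((13 : ℕ) : ℂ) * (2 * Real.pi * Complex.I / 13) = 2 * Real.pi * Complex.I by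
      push_cast; ring]
    exact Complex.exp_two_pi_mul_I
  have hre : ∀ k : ℕ, (ζ ^ k).re = Real.cos (2 * Real.pi * k / 13) := by
    intro k
    rw [hζ, ← Complex.exp_nat_mul]
    rw [show ((k : ℕ) : ℂ) * (2 * Real.pi * Complex.I / 13)
        = ((2 * Real.pi * k / 13 : ℝ) : ℂ) * Complex.I by push_cast; ring]
    exact Complex.exp_ofReal_mul_I_re _
  have him : ζ.im = Real.sin (2 * Real.pi / 13) := by
    rw [hζ, show (2 * Real.pi * Complex.I / 13)
        = ((2 * Real.pi / 13 : ℝ) : ℂ) * Complex.I by push_cast; ring]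
    exact Complex.exp_ofReal_mul_I_im _
  have hpi := Real.pi_pos
  have hζne : ζ ≠ 1 := by
    intro h
    rw [h] at him
    have hsin : Real.sin (2 * Real.pi / 13) > 0 :=
      Real.sin_pos_of_pos_of_lt_pi (by positivity) (by nlinarith)
    simp at him
    linarith
  have hs : 1 + ζ + ζ^2 + ζ^3 + ζ^4 + ζ^5 + ζ^6 + ζ^7 + ζ^8 + ζ^9 + ζ^10 + ζ^11 + ζ^12 = 0 := by
    have hmul : (ζ - 1) * (1 + ζ + ζ^2 + ζ^3 + ζ^4 + ζ^5 + ζ^6 + ζ^7 + ζ^8 + ζ^9 + ζ^10 + ζ^11 + ζ^12) = 0 := by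
      linear_combination h13
    rcases mul_eq_zero.mp hmul with h | h
    · exact absurd (by linear_combination h : ζ = 1) hζne
    · exact h
  set G : ℂ := ζ + ζ^3 + ζ^4 + ζ^9 + ζ^10 + ζ^12 - (ζ^2 + ζ^5 + ζ^6 + ζ^7 + ζ^8 + ζ^11) with hG
  have hg2 : G ^ 2 = 13 := by
    rw [hG]
    linear_combination (-13 + 13*ζ + ζ^2 - 3*ζ^3 + 5*ζ^4 - 3*ζ^5 - 3*ζ^6 + 5*ζ^7 - 3*ζ^8
      - 3*ζ^9 + 5*ζ^10 - 3*ζ^11 + ζ^12) * hs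
  have hconj : (starRingEnd ℂ) ζ = ζ ^ 12 := by
    have h1 : (starRingEnd ℂ) ζ = ζ⁻¹ := by
      rw [hζ, ← Complex.exp_conj, ← Complex.exp_neg]
      congr 1
      simp only [map_div₀, _root_.map_mul, _root_.map_one, Complex.conj_I, Complex.conj_ofReal, map_ofNat]
      ring
    rw [h1]
    exact (eq_inv_of_mul_eq_one_left (by linear_combination h13)).symm
  have hGconj : (starRingEnd ℂ) G = G := by
    rw [hG]
    simp only [map_sub, map_add, map_pow, hconj]
    linear_combination (ζ - ζ^2 + ζ^3 + ζ^4 - ζ^5 - ζ^6 - ζ^7 - ζ^8 + ζ^9 + ζ^10 - ζ^11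
      + ζ^14 - ζ^15 + ζ^16 + ζ^17 - ζ^18 - ζ^19 - ζ^20 - ζ^21 + ζ^22 + ζ^23 + ζ^27 - ζ^28
      + ζ^29 + ζ^30 - ζ^31 - ζ^32 - ζ^33 - ζ^34 + ζ^35 + ζ^40 - ζ^41 + ζ^42 + ζ^43 - ζ^44
      - ζ^45 - ζ^46 - ζ^47 + ζ^53 - ζ^54 + ζ^55 + ζ^56 - ζ^57 - ζ^58 - ζ^59 + ζ^66 - ζ^67
      + ζ^68 + ζ^69 - ζ^70 - ζ^71 + ζ^79 - ζ^80 + ζ^81 + ζ^82 - ζ^83 + ζ^92 - ζ^93 + ζ^94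
      + ζ^95 + ζ^105 - ζ^106 + ζ^107 + ζ^118 - ζ^119 + ζ^131) * h13
  have hGre : ((G.re : ℝ) : ℂ) = G := Complex.conj_eq_iff_re.mp hGconj
  have hre2 : G.re ^ 2 = 13 := by
    have : ((G.re : ℝ) : ℂ) ^ 2 = ((13 : ℝ) : ℂ) := by rw [hGre]; push_cast; exact hg2
    exact_mod_cast this
  -- fold lemmas: cos(2π k/13) = cos(2π (13-k)/13)
  have hfold : ∀ k k' : ℝ, k + k' = 13 →
      Real.cos (2 * Real.pi * k / 13) = Real.cos (2 * Real.pi * k' / 13) := by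
    intro k k' h
    rw [show 2 * Real.pi * k / 13 = 2 * Real.pi - 2 * Real.pi * k' / 13 by
      field_simp; nlinarith [h]]
    rw [Real.cos_sub]
    simp
  have hpos : 0 < G.re := by
    have e : G.re = 2 * (Real.cos (2 * Real.pi * 1 / 13) + Real.cos (2 * Real.pi * 3 / 13)
        + Real.cos (2 * Real.pi * 4 / 13) - Real.cos (2 * Real.pi * 2 / 13)
        - Real.cos (2 * Real.pi * 5 / 13) - Real.cos (2 * Real.pi * 6 / 13)) := by
      have h1 : ζ.re = Real.cos (2 * Real.pi * 1 / 13) := by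
        have := hre 1; push_cast at this; simpa using this
      have e3 := hre 3; have e4 := hre 4; have e9 := hre 9; have e10 := hre 10
      have e12 := hre 12; have e2 := hre 2; have e5 := hre 5; have e6 := hre 6
      have e7 := hre 7; have e8 := hre 8; have e11 := hre 11
      push_cast at e2 e3 e4 e5 e6 e7 e8 e9 e10 e11 e12
      rw [hG]
      simp only [Complex.sub_re, Complex.add_re]
      rw [h1, e2, e3, e4, e5, e6, e7, e8, e9, e10, e11, e12]
      rw [hfold 12 1 (by norm_num), hfold 11 2 (by norm_num), hfold 10 3 (by norm_num),
          hfold 9 4 (by norm_num), hfold 8 5 (by norm_num), hfold 7 6 (by norm_num)]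
      ring
    have i1 : Real.cos (2 * Real.pi * 2 / 13) < Real.cos (2 * Real.pi * 1 / 13) :=
      Real.cos_lt_cos_of_nonneg_of_le_pi (by positivity) (by nlinarith) (by nlinarith)
    have i2 : Real.cos (2 * Real.pi * 5 / 13) < Real.cos (2 * Real.pi * 3 / 13) :=
      Real.cos_lt_cos_of_nonneg_of_le_pi (by positivity) (by nlinarith) (by nlinarith)
    have i3 : Real.cos (2 * Real.pi * 6 / 13) < Real.cos (2 * Real.pi * 4 / 13) :=
      Real.cos_lt_cos_of_nonneg_of_le_pi (by positivity) (by nlinarith) (by nlinarith)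
    rw [e]; linarith
  have hroot : ((Real.sqrt 13 : ℝ) : ℂ) = G := by
    rw [show (13 : ℝ) = G.re ^ 2 from hre2.symm, Real.sqrt_sq hpos.le, hGre]
  refine ⟨?_, ?_, ?_⟩
  · rw [hM, hN]
    ext i j
    fin_cases i <;> fin_cases j <;>
      simp [Matrix.mul_apply, Fin.sum_univ_succ, Matrix.one_apply]
    · rw [hroot, hG]; linear_combination (ζ - 2*ζ^2 + 2*ζ^3 - ζ^5 - ζ^7 + ζ^9) * hs
    · linear_combination (ζ^3 - ζ^4 - ζ^10 + ζ^11) * hs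
    · linear_combination (-ζ^6 + 2*ζ^7 - ζ^8) * hs
    · linear_combination (-ζ^6 + 2*ζ^7 - ζ^8) * hs
    · rw [hroot, hG]; linear_combination (ζ - 2*ζ^2 + 2*ζ^3 - ζ^5 - ζ^7 + ζ^9) * hs
    · linear_combination (ζ^3 - ζ^4 - ζ^10 + ζ^11) * hs
    · linear_combination (ζ^3 - ζ^4 - ζ^10 + ζ^11) * hs
    · linear_combination (-ζ^6 + 2*ζ^7 - ζ^8) * hs
    · rw [hroot, hG]; linear_combination (ζ - 2*ζ^2 + 2*ζ^3 - ζ^5 - ζ^7 + ζ^9) * hs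
  · rw [hM, hN]
    ext i j
    fin_cases i <;> fin_cases j <;>
      simp [Matrix.mul_apply, Fin.sum_univ_succ, Matrix.one_apply]
    · rw [hroot, hG]; linear_combination (ζ - 2*ζ^2 + 2*ζ^3 - ζ^5 - ζ^7 + ζ^9) * hs
    · linear_combination (-ζ^6 + 2*ζ^7 - ζ^8) * hs
    · linear_combination (ζ^3 - ζ^4 - ζ^10 + ζ^11) * hs
    · linear_combination (ζ^3 - ζ^4 - ζ^10 + ζ^11) * hs
    · rw [hroot, hG]; linear_combination (ζ - 2*ζ^2 + 2*ζ^3 - ζ^5 - ζ^7 + ζ^9) * hs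
    · linear_combination (-ζ^6 + 2*ζ^7 - ζ^8) * hs
    · linear_combination (-ζ^6 + 2*ζ^7 - ζ^8) * hs
    · linear_combination (ζ^3 - ζ^4 - ζ^10 + ζ^11) * hs
    · rw [hroot, hG]; linear_combination (ζ - 2*ζ^2 + 2*ζ^3 - ζ^5 - ζ^7 + ζ^9) * hs
  · rw [hM, hN, pow_two, pow_two]
    ext i j
    fin_cases i <;> fin_cases j <;>
      simp [Matrix.add_apply, Matrix.mul_apply, Fin.sum_univ_succ, Matrix.one_apply]
    · linear_combination (13 - 13*ζ + ζ^2 - ζ^3 + ζ^4 - ζ^5 + ζ^6 - ζ^7 + ζ^8 - ζ^9 + ζ^10 - ζ^11 + ζ^12) * hs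
    · linear_combination (ζ^4 - 2*ζ^5 + ζ^6 + ζ^8 - 2*ζ^9 + ζ^10) * hs
    · linear_combination (ζ^4 - 2*ζ^5 + ζ^6 + ζ^8 - 2*ζ^9 + ζ^10) * hs
    · linear_combination (ζ^4 - 2*ζ^5 + ζ^6 + ζ^8 - 2*ζ^9 + ζ^10) * hs
    · linear_combination (13 - 13*ζ + ζ^2 - ζ^3 + ζ^4 - ζ^5 + ζ^6 - ζ^7 + ζ^8 - ζ^9 + ζ^10 - ζ^11 + ζ^12) * hs
    · linear_combination (ζ^4 - 2*ζ^5 + ζ^6 + ζ^8 - 2*ζ^9 + ζ^10) * hs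
    · linear_combination (ζ^4 - 2*ζ^5 + ζ^6 + ζ^8 - 2*ζ^9 + ζ^10) * hs
    · linear_combination (ζ^4 - 2*ζ^5 + ζ^6 + ζ^8 - 2*ζ^9 + ζ^10) * hs
    · linear_combination (13 - 13*ζ + ζ^2 - ζ^3 + ζ^4 - ζ^5 + ζ^6 - ζ^7 + ζ^8 - ζ^9 + ζ^10 - ζ^11 + ζ^12) * hs
end

section
/- Let p₁ = √13(ζ²+ζ¹¹), where ζ = exp(2πi/13). Then p₁ = ζ² + ζ¹¹ - 2 + 2(ζ + ζ¹² - ζ⁹ - ζ⁴). -/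
theorem p1_identity
    (ζ p₁ : ℂ) (hζ : ζ = Complex.exp (2 * Real.pi * Complex.I / 13))
    (hp : p₁ = (Real.sqrt 13 : ℂ) * (ζ^2 + ζ^11)) :
    p₁ = ζ^2 + ζ^11 - 2 + 2*(ζ + ζ^12 - ζ^9 - ζ^4) := by
  have hπ : (Real.pi : ℝ) ≠ 0 := Real.pi_ne_zero
  have h13 : ζ ^ 13 = 1 := by
    rw [hζ, ← Complex.exp_nat_mul]
    rw [show ((13 : ℕ) : ℂ) * (2 * Real.pi * Complex.I / 13) = 2 * Real.pi * Complex.I by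
      push_cast; ring]
    exact Complex.exp_two_pi_mul_I
  have h2pi : (2 : ℂ) * Real.pi * Complex.I ≠ 0 := by
    simp [Complex.I_ne_zero, Complex.ofReal_ne_zero, hπ]
  have hne : ζ ≠ 1 := by
    intro h
    rw [hζ, Complex.exp_eq_one_iff] at h
    obtain ⟨n, hn⟩ := h
    have h1 : (1 : ℂ) * (2 * Real.pi * Complex.I) = ((13 * n : ℤ) : ℂ) * (2 * Real.pi * Complex.I) := by
      push_cast
      linear_combination 13 * hn
    have h3 : (1 : ℤ) = 13 * n := by exact_mod_cast mul_right_cancel₀ h2pi h1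
    omega
  have hsum : ζ^12 + ζ^11 + ζ^10 + ζ^9 + ζ^8 + ζ^7 + ζ^6 + ζ^5 + ζ^4 + ζ^3 + ζ^2 + ζ + 1 = 0 := by
    have hfac : (ζ - 1) * (ζ^12 + ζ^11 + ζ^10 + ζ^9 + ζ^8 + ζ^7 + ζ^6 + ζ^5 + ζ^4 + ζ^3 + ζ^2 + ζ + 1) = 0 := by
      linear_combination h13
    rcases mul_eq_zero.1 hfac with h | h
    · exact absurd (by linear_combination h) hne
    · exact h
  -- conjugate pairs are real cosines
  have hpair : ∀ k : ℕ, k ≤ 13 →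
      ζ^k + ζ^(13 - k) = ((2 * Real.cos (2 * Real.pi * k / 13) : ℝ) : ℂ) := by
    intro k hk13
    set θ : ℝ := 2 * Real.pi * k / 13 with hθ
    have hk : ζ^k = Complex.exp ((θ : ℂ) * Complex.I) := by
      rw [hζ, ← Complex.exp_nat_mul]
      congr 1
      rw [hθ]
      push_cast
      ring
    have hk' : ζ^(13 - k) * ζ^k = 1 := by
      rw [← pow_add, Nat.sub_add_cancel hk13]
      exact h13
    have hinv : ζ^(13 - k) = Complex.exp (((-θ : ℝ) : ℂ) * Complex.I) := by
      have := eq_inv_of_mul_eq_one_left hk'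
      rw [this, hk, ← Complex.exp_neg]
      congr 1
      push_cast
      ring
    rw [hk, hinv, Complex.exp_mul_I, Complex.exp_mul_I]
    push_cast [Complex.cos_neg, Complex.sin_neg, ← Complex.ofReal_cos, ← Complex.ofReal_sin]
    ring
  -- the Gauss sum
  set g : ℝ := 1 + 2 * (2 * Real.cos (2 * Real.pi / 13) + 2 * Real.cos (2 * Real.pi * 3 / 13)
      + 2 * Real.cos (2 * Real.pi * 4 / 13)) with hg
  have hGc : (g : ℂ) = 1 + 2 * (ζ + ζ^3 + ζ^4 + ζ^9 + ζ^10 + ζ^12) := by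
    have h1 := hpair 1 (by norm_num)
    have h3 := hpair 3 (by norm_num)
    have h4 := hpair 4 (by norm_num)
    norm_num at h1 h3 h4
    rw [hg]
    push_cast
    linear_combination (-2) * h1 + (-2) * h3 + (-2) * h4
  -- g squares to 13
  have hGsq : (g : ℂ)^2 = 13 := by
    rw [hGc]
    linear_combination (4*ζ^11 + 8*ζ^9 + 8*ζ^8 + 4*ζ^7 + 8*ζ^6 + 4*ζ^5 + 8*ζ^3 + 8*ζ^2 + 8*ζ + 24) * h13
      + 12 * hsum
  have hgsq : g^2 = 13 := by exact_mod_cast hGsq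
  -- g is positive
  have hgpos : 0 < g := by
    have hc1 : Real.cos (Real.pi / 6) ≤ Real.cos (2 * Real.pi / 13) := by
      apply Real.cos_le_cos_of_nonneg_of_le_pi <;> nlinarith [Real.pi_pos]
    have hc3 : (0:ℝ) ≤ Real.cos (2 * Real.pi * 3 / 13) := by
      apply Real.cos_nonneg_of_mem_Icc
      constructor <;> nlinarith [Real.pi_pos]
    have hc4 : Real.cos (2 * Real.pi * 4 / 13) ≥ -(1/2) := by
      have : Real.cos (Real.pi * 2 / 3) ≤ Real.cos (2 * Real.pi * 4 / 13) := by
        apply Real.cos_le_cos_of_nonneg_of_le_pi <;> nlinarith [Real.pi_pos]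
      have h23 : Real.cos (Real.pi * 2 / 3) = -(1/2) := by
        rw [show Real.pi * 2 / 3 = Real.pi - Real.pi / 3 by ring, Real.cos_pi_sub, Real.cos_pi_div_three]
      linarith
    have h6 : Real.cos (Real.pi / 6) = Real.sqrt 3 / 2 := Real.cos_pi_div_six
    have h3 : (1:ℝ) ≤ Real.sqrt 3 := by
      rw [show (1:ℝ) = Real.sqrt 1 by simp]
      exact Real.sqrt_le_sqrt (by norm_num)
    rw [hg]
    nlinarith
  -- hence g = √13
  have hgeq : Real.sqrt 13 = g := by
    rw [show (13:ℝ) = g^2 by rw [hgsq], Real.sqrt_sq hgpos.le]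
  -- finish
  rw [hp, hgeq, hGc]
  linear_combination (2*ζ^10 + 2*ζ^8 + 2*ζ^7 + 2*ζ^2 + 4*ζ) * h13 + 2 * hsum
end

section
/- Define the 7×7 matrix S̃ over ℂ by S̃ = (1/√13)·A, where A has first row (1,1,1,1,1,1,1), first column (1,2,2,2,2,2,2)ᵀ, and remaining (j,k)-entries (for 1 ≤ j,k ≤ 6) equal to ζ^{aⱼaₖ·4} + ζ^{-aⱼaₖ·4} arranged as in the explicit matrix with entries from {ζ²+ζ¹¹, ζ⁹+ζ⁴, ζ⁶+ζ⁷, ζ⁵+ζ⁸, ζ³+ζ¹⁰, ζ+ζ¹²} (the explicit symmetric arrangement given). Then S̃² = I. -/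
set_option maxHeartbeats 4000000

open Matrix

lemma cv5 (x : ℂ) (u : Fin 6 → ℂ) : Matrix.vecCons x u 5 = u 4 := rfl
lemma cv5' (x : ℂ) (u : Fin 5 → ℂ) : Matrix.vecCons x u 5 = u 4 := rfl
lemma cv6 (x : ℂ) (u : Fin 6 → ℂ) : Matrix.vecCons x u 6 = u 5 := rfl

theorem Stilde_squared_eq_one
    (ζ : ℂ) (hζ : ζ = Complex.exp (2 * Real.pi * Complex.I / 13))
    (S : Matrix (Fin 7) (Fin 7) ℂ)
    (hS : S = (1 / (Real.sqrt 13 : ℂ)) •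
      !![1, 1, 1, 1, 1, 1, 1;
         2, ζ^2+ζ^11, ζ^9+ζ^4, ζ^6+ζ^7, ζ^5+ζ^8, ζ^3+ζ^10, ζ+ζ^12;
         2, ζ^9+ζ^4, ζ^5+ζ^8, ζ+ζ^12, ζ^3+ζ^10, ζ^6+ζ^7, ζ^2+ζ^11;
         2, ζ^6+ζ^7, ζ+ζ^12, ζ^5+ζ^8, ζ^2+ζ^11, ζ^9+ζ^4, ζ^3+ζ^10;
         2, ζ^5+ζ^8, ζ^3+ζ^10, ζ^2+ζ^11, ζ^6+ζ^7, ζ+ζ^12, ζ^9+ζ^4;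
         2, ζ^3+ζ^10, ζ^6+ζ^7, ζ^9+ζ^4, ζ+ζ^12, ζ^2+ζ^11, ζ^5+ζ^8;
         2, ζ+ζ^12, ζ^2+ζ^11, ζ^3+ζ^10, ζ^9+ζ^4, ζ^5+ζ^8, ζ^6+ζ^7]) :
    S ^ 2 = 1 := by
  have h13 : ζ ^ 13 = 1 := by
    rw [hζ, ← Complex.exp_nat_mul]
    have h : (13 : ℕ) * (2 * (Real.pi : ℂ) * Complex.I / 13) = 2 * Real.pi * Complex.I := by
      push_cast; ring
    rw [h]
    simpa using Complex.exp_int_mul_two_pi_mul_I 1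
  have h2 : (2 : ℂ) * Real.pi * Complex.I ≠ 0 := by
    simp [Real.pi_ne_zero, Complex.I_ne_zero]
  have hne : ζ ≠ 1 := by
    rw [hζ]
    intro h
    rw [Complex.exp_eq_one_iff] at h
    obtain ⟨n, hn⟩ := h
    have hmul : (2 * (Real.pi : ℂ) * Complex.I) * 1 = (2 * (Real.pi : ℂ) * Complex.I) * (13 * n) := by
      linear_combination (13 : ℂ) * hn
    have h1 : (1 : ℂ) = 13 * n := mul_left_cancel₀ h2 hmul
    have h1' : (1 : ℤ) = 13 * n := by exact_mod_cast h1
    omega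
  have hsum : ζ^12 + ζ^11 + ζ^10 + ζ^9 + ζ^8 + ζ^7 + ζ^6 + ζ^5 + ζ^4 + ζ^3 + ζ^2 + ζ + 1 = 0 := by
    have hm : (ζ - 1) * (ζ^12 + ζ^11 + ζ^10 + ζ^9 + ζ^8 + ζ^7 + ζ^6 + ζ^5 + ζ^4 + ζ^3 + ζ^2 + ζ + 1) = 0 := by
      linear_combination h13
    rcases mul_eq_zero.mp hm with h | h
    · exact absurd (sub_eq_zero.mp h) hne
    · exact h
  have key : (!![1, 1, 1, 1, 1, 1, 1;
         2, ζ^2+ζ^11, ζ^9+ζ^4, ζ^6+ζ^7, ζ^5+ζ^8, ζ^3+ζ^10, ζ+ζ^12;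
         2, ζ^9+ζ^4, ζ^5+ζ^8, ζ+ζ^12, ζ^3+ζ^10, ζ^6+ζ^7, ζ^2+ζ^11;
         2, ζ^6+ζ^7, ζ+ζ^12, ζ^5+ζ^8, ζ^2+ζ^11, ζ^9+ζ^4, ζ^3+ζ^10;
         2, ζ^5+ζ^8, ζ^3+ζ^10, ζ^2+ζ^11, ζ^6+ζ^7, ζ+ζ^12, ζ^9+ζ^4;
         2, ζ^3+ζ^10, ζ^6+ζ^7, ζ^9+ζ^4, ζ+ζ^12, ζ^2+ζ^11, ζ^5+ζ^8;
         2, ζ+ζ^12, ζ^2+ζ^11, ζ^3+ζ^10, ζ^9+ζ^4, ζ^5+ζ^8, ζ^6+ζ^7] : Matrix (Fin 7) (Fin 7) ℂ) *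
      !![1, 1, 1, 1, 1, 1, 1;
         2, ζ^2+ζ^11, ζ^9+ζ^4, ζ^6+ζ^7, ζ^5+ζ^8, ζ^3+ζ^10, ζ+ζ^12;
         2, ζ^9+ζ^4, ζ^5+ζ^8, ζ+ζ^12, ζ^3+ζ^10, ζ^6+ζ^7, ζ^2+ζ^11;
         2, ζ^6+ζ^7, ζ+ζ^12, ζ^5+ζ^8, ζ^2+ζ^11, ζ^9+ζ^4, ζ^3+ζ^10;
         2, ζ^5+ζ^8, ζ^3+ζ^10, ζ^2+ζ^11, ζ^6+ζ^7, ζ+ζ^12, ζ^9+ζ^4;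
         2, ζ^3+ζ^10, ζ^6+ζ^7, ζ^9+ζ^4, ζ+ζ^12, ζ^2+ζ^11, ζ^5+ζ^8;
         2, ζ+ζ^12, ζ^2+ζ^11, ζ^3+ζ^10, ζ^9+ζ^4, ζ^5+ζ^8, ζ^6+ζ^7] = (13 : ℂ) • 1 := by
    ext i j
    rw [Matrix.mul_apply, Fin.sum_univ_seven]
    fin_cases i <;> fin_cases j <;>
      simp [Matrix.one_apply, cv5, cv5', cv6, Matrix.vecHead, Matrix.vecTail]
    · linear_combination
    · linear_combination (1:ℂ) * hsum
    · linear_combination (1:ℂ) * hsum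
    · linear_combination (1:ℂ) * hsum
    · linear_combination (1:ℂ) * hsum
    · linear_combination (1:ℂ) * hsum
    · linear_combination (1:ℂ) * hsum
    · linear_combination (2:ℂ) * hsum
    · linear_combination ((12:ℂ) + (1:ℂ)*ζ + (1:ℂ)*ζ^3 + (1:ℂ)*ζ^5 + (1:ℂ)*ζ^7 + (1:ℂ)*ζ^9 + (1:ℂ)*ζ^11) * h13 + (1:ℂ) * hsum
    · linear_combination ((2:ℂ)*ζ + (2:ℂ)*ζ^2 + (1:ℂ)*ζ^3 + (2:ℂ)*ζ^4 + (2:ℂ)*ζ^5 + (1:ℂ)*ζ^6 + (1:ℂ)*ζ^7 + (1:ℂ)*ζ^10) * h13 + (2:ℂ) * hsum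
    · linear_combination ((2:ℂ)*ζ + (2:ℂ)*ζ^2 + (2:ℂ)*ζ^3 + (1:ℂ)*ζ^4 + (1:ℂ)*ζ^5 + (2:ℂ)*ζ^6 + (1:ℂ)*ζ^8 + (1:ℂ)*ζ^9) * h13 + (2:ℂ) * hsum
    · linear_combination ((2:ℂ)*ζ + (2:ℂ)*ζ^2 + (2:ℂ)*ζ^3 + (1:ℂ)*ζ^4 + (1:ℂ)*ζ^5 + (2:ℂ)*ζ^6 + (1:ℂ)*ζ^8 + (1:ℂ)*ζ^9) * h13 + (2:ℂ) * hsum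
    · linear_combination ((2:ℂ)*ζ + (2:ℂ)*ζ^2 + (2:ℂ)*ζ^3 + (2:ℂ)*ζ^4 + (2:ℂ)*ζ^7 + (2:ℂ)*ζ^8) * h13 + (2:ℂ) * hsum
    · linear_combination ((2:ℂ)*ζ + (2:ℂ)*ζ^2 + (1:ℂ)*ζ^3 + (2:ℂ)*ζ^4 + (2:ℂ)*ζ^5 + (1:ℂ)*ζ^6 + (1:ℂ)*ζ^7 + (1:ℂ)*ζ^10) * h13 + (2:ℂ) * hsum
    · linear_combination (2:ℂ) * hsum
    · linear_combination ((2:ℂ)*ζ + (2:ℂ)*ζ^2 + (1:ℂ)*ζ^3 + (2:ℂ)*ζ^4 + (2:ℂ)*ζ^5 + (1:ℂ)*ζ^6 + (1:ℂ)*ζ^7 + (1:ℂ)*ζ^10) * h13 + (2:ℂ) * hsum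
    · linear_combination ((12:ℂ) + (1:ℂ)*ζ + (1:ℂ)*ζ^3 + (1:ℂ)*ζ^5 + (1:ℂ)*ζ^7 + (1:ℂ)*ζ^9 + (1:ℂ)*ζ^11) * h13 + (1:ℂ) * hsum
    · linear_combination ((2:ℂ)*ζ + (2:ℂ)*ζ^2 + (2:ℂ)*ζ^3 + (2:ℂ)*ζ^4 + (2:ℂ)*ζ^7 + (2:ℂ)*ζ^8) * h13 + (2:ℂ) * hsum
    · linear_combination ((2:ℂ)*ζ + (2:ℂ)*ζ^2 + (1:ℂ)*ζ^3 + (2:ℂ)*ζ^4 + (2:ℂ)*ζ^5 + (1:ℂ)*ζ^6 + (1:ℂ)*ζ^7 + (1:ℂ)*ζ^10) * h13 + (2:ℂ) * hsum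
    · linear_combination ((2:ℂ)*ζ + (2:ℂ)*ζ^2 + (2:ℂ)*ζ^3 + (1:ℂ)*ζ^4 + (1:ℂ)*ζ^5 + (2:ℂ)*ζ^6 + (1:ℂ)*ζ^8 + (1:ℂ)*ζ^9) * h13 + (2:ℂ) * hsum
    · linear_combination ((2:ℂ)*ζ + (2:ℂ)*ζ^2 + (2:ℂ)*ζ^3 + (1:ℂ)*ζ^4 + (1:ℂ)*ζ^5 + (2:ℂ)*ζ^6 + (1:ℂ)*ζ^8 + (1:ℂ)*ζ^9) * h13 + (2:ℂ) * hsum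
    · linear_combination (2:ℂ) * hsum
    · linear_combination ((2:ℂ)*ζ + (2:ℂ)*ζ^2 + (2:ℂ)*ζ^3 + (1:ℂ)*ζ^4 + (1:ℂ)*ζ^5 + (2:ℂ)*ζ^6 + (1:ℂ)*ζ^8 + (1:ℂ)*ζ^9) * h13 + (2:ℂ) * hsum
    · linear_combination ((2:ℂ)*ζ + (2:ℂ)*ζ^2 + (2:ℂ)*ζ^3 + (2:ℂ)*ζ^4 + (2:ℂ)*ζ^7 + (2:ℂ)*ζ^8) * h13 + (2:ℂ) * hsum
    · linear_combination ((12:ℂ) + (1:ℂ)*ζ + (1:ℂ)*ζ^3 + (1:ℂ)*ζ^5 + (1:ℂ)*ζ^7 + (1:ℂ)*ζ^9 + (1:ℂ)*ζ^11) * h13 + (1:ℂ) * hsum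
    · linear_combination ((2:ℂ)*ζ + (2:ℂ)*ζ^2 + (2:ℂ)*ζ^3 + (1:ℂ)*ζ^4 + (1:ℂ)*ζ^5 + (2:ℂ)*ζ^6 + (1:ℂ)*ζ^8 + (1:ℂ)*ζ^9) * h13 + (2:ℂ) * hsum
    · linear_combination ((2:ℂ)*ζ + (2:ℂ)*ζ^2 + (1:ℂ)*ζ^3 + (2:ℂ)*ζ^4 + (2:ℂ)*ζ^5 + (1:ℂ)*ζ^6 + (1:ℂ)*ζ^7 + (1:ℂ)*ζ^10) * h13 + (2:ℂ) * hsum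
    · linear_combination ((2:ℂ)*ζ + (2:ℂ)*ζ^2 + (1:ℂ)*ζ^3 + (2:ℂ)*ζ^4 + (2:ℂ)*ζ^5 + (1:ℂ)*ζ^6 + (1:ℂ)*ζ^7 + (1:ℂ)*ζ^10) * h13 + (2:ℂ) * hsum
    · linear_combination (2:ℂ) * hsum
    · linear_combination ((2:ℂ)*ζ + (2:ℂ)*ζ^2 + (2:ℂ)*ζ^3 + (1:ℂ)*ζ^4 + (1:ℂ)*ζ^5 + (2:ℂ)*ζ^6 + (1:ℂ)*ζ^8 + (1:ℂ)*ζ^9) * h13 + (2:ℂ) * hsum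
    · linear_combination ((2:ℂ)*ζ + (2:ℂ)*ζ^2 + (1:ℂ)*ζ^3 + (2:ℂ)*ζ^4 + (2:ℂ)*ζ^5 + (1:ℂ)*ζ^6 + (1:ℂ)*ζ^7 + (1:ℂ)*ζ^10) * h13 + (2:ℂ) * hsum
    · linear_combination ((2:ℂ)*ζ + (2:ℂ)*ζ^2 + (2:ℂ)*ζ^3 + (1:ℂ)*ζ^4 + (1:ℂ)*ζ^5 + (2:ℂ)*ζ^6 + (1:ℂ)*ζ^8 + (1:ℂ)*ζ^9) * h13 + (2:ℂ) * hsum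
    · linear_combination ((12:ℂ) + (1:ℂ)*ζ + (1:ℂ)*ζ^3 + (1:ℂ)*ζ^5 + (1:ℂ)*ζ^7 + (1:ℂ)*ζ^9 + (1:ℂ)*ζ^11) * h13 + (1:ℂ) * hsum
    · linear_combination ((2:ℂ)*ζ + (2:ℂ)*ζ^2 + (1:ℂ)*ζ^3 + (2:ℂ)*ζ^4 + (2:ℂ)*ζ^5 + (1:ℂ)*ζ^6 + (1:ℂ)*ζ^7 + (1:ℂ)*ζ^10) * h13 + (2:ℂ) * hsum
    · linear_combination ((2:ℂ)*ζ + (2:ℂ)*ζ^2 + (2:ℂ)*ζ^3 + (2:ℂ)*ζ^4 + (2:ℂ)*ζ^7 + (2:ℂ)*ζ^8) * h13 + (2:ℂ) * hsum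
    · linear_combination (2:ℂ) * hsum
    · linear_combination ((2:ℂ)*ζ + (2:ℂ)*ζ^2 + (2:ℂ)*ζ^3 + (2:ℂ)*ζ^4 + (2:ℂ)*ζ^7 + (2:ℂ)*ζ^8) * h13 + (2:ℂ) * hsum
    · linear_combination ((2:ℂ)*ζ + (2:ℂ)*ζ^2 + (2:ℂ)*ζ^3 + (1:ℂ)*ζ^4 + (1:ℂ)*ζ^5 + (2:ℂ)*ζ^6 + (1:ℂ)*ζ^8 + (1:ℂ)*ζ^9) * h13 + (2:ℂ) * hsum
    · linear_combination ((2:ℂ)*ζ + (2:ℂ)*ζ^2 + (1:ℂ)*ζ^3 + (2:ℂ)*ζ^4 + (2:ℂ)*ζ^5 + (1:ℂ)*ζ^6 + (1:ℂ)*ζ^7 + (1:ℂ)*ζ^10) * h13 + (2:ℂ) * hsum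
    · linear_combination ((2:ℂ)*ζ + (2:ℂ)*ζ^2 + (1:ℂ)*ζ^3 + (2:ℂ)*ζ^4 + (2:ℂ)*ζ^5 + (1:ℂ)*ζ^6 + (1:ℂ)*ζ^7 + (1:ℂ)*ζ^10) * h13 + (2:ℂ) * hsum
    · linear_combination ((12:ℂ) + (1:ℂ)*ζ + (1:ℂ)*ζ^3 + (1:ℂ)*ζ^5 + (1:ℂ)*ζ^7 + (1:ℂ)*ζ^9 + (1:ℂ)*ζ^11) * h13 + (1:ℂ) * hsum
    · linear_combination ((2:ℂ)*ζ + (2:ℂ)*ζ^2 + (2:ℂ)*ζ^3 + (1:ℂ)*ζ^4 + (1:ℂ)*ζ^5 + (2:ℂ)*ζ^6 + (1:ℂ)*ζ^8 + (1:ℂ)*ζ^9) * h13 + (2:ℂ) * hsum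
    · linear_combination (2:ℂ) * hsum
    · linear_combination ((2:ℂ)*ζ + (2:ℂ)*ζ^2 + (1:ℂ)*ζ^3 + (2:ℂ)*ζ^4 + (2:ℂ)*ζ^5 + (1:ℂ)*ζ^6 + (1:ℂ)*ζ^7 + (1:ℂ)*ζ^10) * h13 + (2:ℂ) * hsum
    · linear_combination ((2:ℂ)*ζ + (2:ℂ)*ζ^2 + (2:ℂ)*ζ^3 + (1:ℂ)*ζ^4 + (1:ℂ)*ζ^5 + (2:ℂ)*ζ^6 + (1:ℂ)*ζ^8 + (1:ℂ)*ζ^9) * h13 + (2:ℂ) * hsum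
    · linear_combination ((2:ℂ)*ζ + (2:ℂ)*ζ^2 + (1:ℂ)*ζ^3 + (2:ℂ)*ζ^4 + (2:ℂ)*ζ^5 + (1:ℂ)*ζ^6 + (1:ℂ)*ζ^7 + (1:ℂ)*ζ^10) * h13 + (2:ℂ) * hsum
    · linear_combination ((2:ℂ)*ζ + (2:ℂ)*ζ^2 + (2:ℂ)*ζ^3 + (2:ℂ)*ζ^4 + (2:ℂ)*ζ^7 + (2:ℂ)*ζ^8) * h13 + (2:ℂ) * hsum
    · linear_combination ((2:ℂ)*ζ + (2:ℂ)*ζ^2 + (2:ℂ)*ζ^3 + (1:ℂ)*ζ^4 + (1:ℂ)*ζ^5 + (2:ℂ)*ζ^6 + (1:ℂ)*ζ^8 + (1:ℂ)*ζ^9) * h13 + (2:ℂ) * hsum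
    · linear_combination ((12:ℂ) + (1:ℂ)*ζ + (1:ℂ)*ζ^3 + (1:ℂ)*ζ^5 + (1:ℂ)*ζ^7 + (1:ℂ)*ζ^9 + (1:ℂ)*ζ^11) * h13 + (1:ℂ) * hsum
  have hs13 : (Real.sqrt 13 : ℂ) * Real.sqrt 13 = 13 := by
    norm_cast
    exact Real.mul_self_sqrt (by norm_num)
  have hs0 : (Real.sqrt 13 : ℂ) ≠ 0 := by
    intro h
    rw [h, mul_zero] at hs13
    norm_num at hs13
  have hc : 1 / (Real.sqrt 13 : ℂ) * (1 / (Real.sqrt 13 : ℂ)) * 13 = 1 := by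
    rw [show 1 / (Real.sqrt 13 : ℂ) * (1 / (Real.sqrt 13 : ℂ)) * 13
        = 13 / ((Real.sqrt 13 : ℂ) * (Real.sqrt 13 : ℂ)) from by ring, hs13,
      div_self (by norm_num : (13:ℂ) ≠ 0)]
  subst hS
  rw [sq, Matrix.smul_mul, Matrix.mul_smul, key, smul_smul, smul_smul, hc, one_smul]
end

section
/- In the polynomial ring ℂ[z₁,...,z₆], define 𝔸₀ = z₁z₄+z₂z₅+z₃z₆, 𝔸₁ = z₁²-2z₃z₄, 𝔸₂ = -z₅²-2z₂z₄, 𝔸₃ = z₂²-2z₁z₅, 𝔸₄ = z₃²-2z₂z₆, 𝔸₅ = -z₄²-2z₁z₆, 𝔸₆ = -z₆²-2z₃z₅. Then 𝔸₀² + 𝔸₁𝔸₅ + 𝔸₂𝔸₃ + 𝔸₄𝔸₆ = 2·Φ₄, where Φ₄ = (z₃z₄³+z₁z₅³+z₂z₆³) - (z₆z₁³+z₄z₂³+z₅z₃³) + 3(z₁z₂z₄z₅+z₂z₃z₅z₆+z₃z₁z₆z₄). -/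
theorem quadrics_decompose_quartic (z₁ z₂ z₃ z₄ z₅ z₆ : ℂ) :
    (z₁*z₄ + z₂*z₅ + z₃*z₆)^2
      + (z₁^2 - 2*z₃*z₄) * (-z₄^2 - 2*z₁*z₆)
      + (-z₅^2 - 2*z₂*z₄) * (z₂^2 - 2*z₁*z₅)
      + (z₃^2 - 2*z₂*z₆) * (-z₆^2 - 2*z₃*z₅)
    = 2 * ((z₃*z₄^3 + z₁*z₅^3 + z₂*z₆^3) - (z₆*z₁^3 + z₄*z₂^3 + z₅*z₃^3)
        + 3*(z₁*z₂*z₄*z₅ + z₂*z₃*z₅*z₆ + z₃*z₁*z₆*z₄)) := by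
  ring
end

section
/- Let ζ = exp(2πi/13) and for ν = 0,...,12 set φ_ν = 𝔸₀ + ζ^ν 𝔸₁ + ζ^{4ν} 𝔸₂ + ζ^{9ν} 𝔸₃ + ζ^{3ν} 𝔸₄ + ζ^{12ν} 𝔸₅ + ζ^{10ν} 𝔸₆, and φ_∞ = √13·𝔸₀, where the 𝔸ⱼ are the senary quadratic forms defined by 𝔸₀ = z₁z₄+z₂z₅+z₃z₆, 𝔸₁ = z₁²-2z₃z₄, 𝔸₂ = -z₅²-2z₂z₄, 𝔸₃ = z₂²-2z₁z₅, 𝔸₄ = z₃²-2z₂z₆, 𝔸₅ = -z₄²-2z₁z₆, 𝔸₆ = -z₆²-2z₃z₅. Then φ_∞² + Σ_{ν=0}^{12} φ_ν² = 26·(𝔸₀² + 𝔸₁𝔸₅ + 𝔸₂𝔸₃ + 𝔸₄𝔸₆) as polynomials in z₁,...,z₆. -/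
open Finset

theorem phi_sum_of_squares
    (ζ : ℂ) (hζ : ζ = Complex.exp (2 * Real.pi * Complex.I / 13))
    (z₁ z₂ z₃ z₄ z₅ z₆ : ℂ)
    (A₀ A₁ A₂ A₃ A₄ A₅ A₆ : ℂ)
    (h0 : A₀ = z₁*z₄ + z₂*z₅ + z₃*z₆)
    (h1 : A₁ = z₁^2 - 2*z₃*z₄)
    (h2 : A₂ = -z₅^2 - 2*z₂*z₄)
    (h3 : A₃ = z₂^2 - 2*z₁*z₅)
    (h4 : A₄ = z₃^2 - 2*z₂*z₆)
    (h5 : A₅ = -z₄^2 - 2*z₁*z₆)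
    (h6 : A₆ = -z₆^2 - 2*z₃*z₅) :
    ((Real.sqrt 13 : ℂ) * A₀)^2 +
      ∑ ν ∈ Finset.range 13,
        (A₀ + ζ^ν * A₁ + ζ^(4*ν) * A₂ + ζ^(9*ν) * A₃ + ζ^(3*ν) * A₄
          + ζ^(12*ν) * A₅ + ζ^(10*ν) * A₆)^2
    = 26 * (A₀^2 + A₁*A₅ + A₂*A₃ + A₄*A₆) := by
  have hprim : IsPrimitiveRoot ζ 13 := by
    rw [hζ]; exact Complex.isPrimitiveRoot_exp 13 (by norm_num)
  have h13 : ζ ^ 13 = 1 := hprim.pow_eq_one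
  -- sums of powers
  have hS : ∀ k : ℕ, ¬ (13 ∣ k) → ∑ ν ∈ Finset.range 13, ζ ^ (k * ν) = 0 := by
    intro k hk
    have hne : ζ ^ k ≠ 1 := fun h => hk ((hprim.pow_eq_one_iff_dvd k).mp h)
    have : ∑ ν ∈ Finset.range 13, (ζ ^ k) ^ ν = 0 := by
      rw [geom_sum_eq hne]
      have : (ζ ^ k) ^ 13 = 1 := by
        rw [← pow_mul, mul_comm, pow_mul, h13, one_pow]
      rw [this]; simp
    simpa [pow_mul] using this
  have hS13 : ∑ ν ∈ Finset.range 13, ζ ^ (13 * ν) = 13 := by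
    have : ∀ ν : ℕ, ζ ^ (13 * ν) = 1 := fun ν => by
      rw [pow_mul, h13, one_pow]
    simp [this]
  -- expand each summand
  have expand : ∀ ν ∈ Finset.range 13,
      (A₀ + ζ^ν * A₁ + ζ^(4*ν) * A₂ + ζ^(9*ν) * A₃ + ζ^(3*ν) * A₄
          + ζ^(12*ν) * A₅ + ζ^(10*ν) * A₆)^2
      = A₀^2 * ζ^(0*ν) + (2*A₀*A₁) * ζ^(1*ν) + (2*A₀*A₂) * ζ^(4*ν)
        + (2*A₀*A₃) * ζ^(9*ν) + (2*A₀*A₄) * ζ^(3*ν) + (2*A₀*A₅) * ζ^(12*ν)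
        + (2*A₀*A₆) * ζ^(10*ν) + A₁^2 * ζ^(2*ν) + (2*A₁*A₂) * ζ^(5*ν)
        + (2*A₁*A₃) * ζ^(10*ν) + (2*A₁*A₄) * ζ^(4*ν) + (2*A₁*A₅) * ζ^(13*ν)
        + (2*A₁*A₆) * ζ^(11*ν) + A₂^2 * ζ^(8*ν) + (2*A₂*A₃) * ζ^(13*ν)
        + (2*A₂*A₄) * ζ^(7*ν) + (2*A₂*A₅) * ζ^(16*ν) + (2*A₂*A₆) * ζ^(14*ν)
        + A₃^2 * ζ^(18*ν) + (2*A₃*A₄) * ζ^(12*ν) + (2*A₃*A₅) * ζ^(21*ν)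
        + (2*A₃*A₆) * ζ^(19*ν) + A₄^2 * ζ^(6*ν) + (2*A₄*A₅) * ζ^(15*ν)
        + (2*A₄*A₆) * ζ^(13*ν) + A₅^2 * ζ^(24*ν) + (2*A₅*A₆) * ζ^(22*ν)
        + A₆^2 * ζ^(20*ν) := by
    intro ν _
    have hx : ∀ k : ℕ, ζ ^ (k * ν) = (ζ ^ ν) ^ k := fun k => by
      rw [mul_comm, pow_mul]
    simp only [hx]
    ring
  rw [Finset.sum_congr rfl expand]
  simp only [Finset.sum_add_distrib, ← Finset.mul_sum]
  rw [hS13, hS 1 (by norm_num), hS 4 (by norm_num), hS 9 (by norm_num),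
    hS 3 (by norm_num), hS 12 (by norm_num), hS 10 (by norm_num),
    hS 2 (by norm_num), hS 5 (by norm_num), hS 11 (by norm_num),
    hS 8 (by norm_num), hS 7 (by norm_num), hS 16 (by norm_num),
    hS 14 (by norm_num), hS 18 (by norm_num), hS 21 (by norm_num),
    hS 19 (by norm_num), hS 6 (by norm_num), hS 15 (by norm_num),
    hS 24 (by norm_num), hS 22 (by norm_num), hS 20 (by norm_num)]
  have hsqrt : ((Real.sqrt 13 : ℝ) : ℂ)^2 = 13 := by
    rw [← Complex.ofReal_pow, Real.sq_sqrt (by norm_num : (13:ℝ) ≥ 0)]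
    norm_num
  have hS0 : ∑ ν ∈ Finset.range 13, ζ ^ (0 * ν) = 13 := by simp
  rw [hS0]
  rw [mul_pow, hsqrt]; ring
end
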